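/- Let c ≥ 0, λ > 0, and let J : ℝ → ℝ be continuous, strictly positive, and 2π-periodic. Then for all z ∈ ℝ, (ρ_c(λ)/(2λ)) · min_{x∈ℝ} J(x) ≤ R_λ(z) ≤ (ρ_c(λ)/(2λ)) · max_{x∈ℝ} J(x). Moreover, if J is not a constant function, both inequalities are strict for every z. -/

import Mathlib

/-- The Heaviside step function. -/
noncomputable def Heav (z : ℝ) : ℝ := if z < 0 then 0 else 1

/-- The synaptic profile `r_λ(z)`, given by formula (3.10); on `(-π, π) \ {0}` (the only
values relevant to the integrals below) it equals
`(1/2) e^{-(λz + (c/2)H(z))} [H(z) + (e^{2πλ + c/2} - 1)⁻¹]`. -/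
noncomputable def rTheta (c lam z : ℝ) : ℝ :=
  (1 / 2) * Real.exp (-(lam * z + (c / 2) * Heav z)) *
    (Heav z + (Real.exp (2 * Real.pi * lam + c / 2) - 1)⁻¹)

/-- `R_λ(z) = ∫_{-π}^{π} J(z - y) r_λ(y) dy` (formula (3.13)). -/
noncomputable def RTheta (J : ℝ → ℝ) (c lam z : ℝ) : ℝ :=
  ∫ y in (-Real.pi)..Real.pi, J (z - y) * rTheta c lam y

/-- `h(θ) = 1 - cos θ + β(1 + cos θ)`. -/
noncomputable def hTheta (β θ : ℝ) : ℝ := 1 - Real.cos θ + β * (1 + Real.cos θ)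

/-- `w(θ) = 1 + cos θ`. -/
noncomputable def wTheta (θ : ℝ) : ℝ := 1 + Real.cos θ

/-- `ρ_c(λ) = (e^{2πλ} - 1)/(e^{2πλ + c/2} - 1)`. -/
noncomputable def rhoC (c lam : ℝ) : ℝ :=
  (Real.exp (2 * Real.pi * lam) - 1) / (Real.exp (2 * Real.pi * lam + c / 2) - 1)

/-- `f_{c,β}(λ) = (1 - 4βλ²)/(2λ ρ_c(λ))`. -/
noncomputable def fCB (c β lam : ℝ) : ℝ := (1 - 4 * β * lam ^ 2) / (2 * lam * rhoC c lam)

/-!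
`r_λ` is strictly positive with total mass `ρ_c(λ)/(2λ)` on `[-π, π]`, so `R_λ(z)` is that
mass times a weighted average of `J(z - ·)`, which lies between `min J` and `max J`. If `J` is
not constant, then by periodicity `J(z - ·)` differs from its minimum (maximum) somewhere on
`[-π, π]`, hence on an open subinterval, which carries positive `r_λ`-mass; so the bounds are
strict.
-/

open Real MeasureTheory Set Function

lemma integral_mul_pos_of_exists_ne_zero {a b : ℝ} {w g : ℝ → ℝ} (hab : a < b)
    (hw : IntervalIntegrable w volume a b) (hw_pos : ∀ y ∈ Ioo a b, 0 < w y)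
    (hg : Continuous g) (hg_nonneg : ∀ y ∈ Ioo a b, 0 ≤ g y) (hne : ∃ y ∈ Icc a b, g y ≠ 0) :
    0 < ∫ y in a..b, g y * w y := by
  have hgw : IntegrableOn (fun y => g y * w y) (Ioo a b) :=
    (hw.continuousOn_mul hg.continuousOn).1.mono_set Ioo_subset_Ioc_self
  rw [intervalIntegral.integral_of_le hab.le, integral_Ioc_eq_integral_Ioo,
    setIntegral_pos_iff_support_of_nonneg_ae (ae_restrict_of_forall_mem measurableSet_Ioo
      fun y hy => mul_nonneg (hg_nonneg y hy) (hw_pos y hy).le) hgw]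
  have hsupport : (Ioo a b ∩ support g).Nonempty := by
    rw [← closure_inter_open_nonempty_iff hg.isOpen_support, closure_Ioo hab.ne]
    exact hne
  refine ((isOpen_Ioo.inter hg.isOpen_support).measure_pos volume hsupport).trans_le
    (measure_mono ?_)
  rintro y ⟨hy, hgy⟩
  exact ⟨mul_ne_zero hgy (hw_pos y hy).ne', hy⟩

lemma integral_exp_neg_mul {k : ℝ} (hk : k ≠ 0) (a b : ℝ) :
    ∫ y in a..b, exp (-k * y) = (exp (-k * a) - exp (-k * b)) / k := by
  rw [intervalIntegral.integral_comp_mul_left exp (neg_ne_zero.2 hk), integral_exp, smul_eq_mul]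
  field_simp
  ring

section Profile

variable {c lam : ℝ}

lemma one_lt_exp_two_pi_mul_add (hc : 0 ≤ c) (hlam : 0 < lam) :
    1 < exp (2 * π * lam + c / 2) :=
  one_lt_exp_iff.2 (by positivity)

lemma rTheta_pos (hc : 0 ≤ c) (hlam : 0 < lam) (y : ℝ) : 0 < rTheta c lam y := by
  have hK := inv_pos.2 (sub_pos.2 (one_lt_exp_two_pi_mul_add hc hlam))
  unfold rTheta Heav
  split_ifs <;> positivity

lemma rTheta_of_neg {y : ℝ} (hy : y < 0) :
    rTheta c lam y = (exp (2 * π * lam + c / 2) - 1)⁻¹ / 2 * exp (-lam * y) := by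
  simp only [rTheta, Heav, if_pos hy]
  ring_nf

lemma rTheta_of_nonneg {y : ℝ} (hy : 0 ≤ y) :
    rTheta c lam y =
      exp (-(c / 2)) * (1 + (exp (2 * π * lam + c / 2) - 1)⁻¹) / 2 * exp (-lam * y) := by
  rw [rTheta, Heav, if_neg hy.not_gt, show -(lam * y + c / 2 * 1) = -(c / 2) + -lam * y by ring,
    exp_add]
  ring

lemma eqOn_rTheta_neg_pi_zero : EqOn (rTheta c lam)
    (fun y => (exp (2 * π * lam + c / 2) - 1)⁻¹ / 2 * exp (-lam * y)) (uIoo (-π) 0) := by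
  intro y hy
  rw [uIoo_of_le (neg_nonpos.2 pi_pos.le)] at hy
  exact rTheta_of_neg hy.2

lemma eqOn_rTheta_zero_pi : EqOn (rTheta c lam)
    (fun y => exp (-(c / 2)) * (1 + (exp (2 * π * lam + c / 2) - 1)⁻¹) / 2 * exp (-lam * y))
    (uIoo 0 π) := by
  intro y hy
  rw [uIoo_of_le pi_pos.le] at hy
  exact rTheta_of_nonneg hy.1.le

lemma intervalIntegrable_rTheta_neg_pi_zero (c lam : ℝ) :
    IntervalIntegrable (rTheta c lam) volume (-π) 0 :=
  (Continuous.intervalIntegrable (by fun_prop) _ _).congr_uIoo eqOn_rTheta_neg_pi_zero.symm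

lemma intervalIntegrable_rTheta_zero_pi (c lam : ℝ) :
    IntervalIntegrable (rTheta c lam) volume 0 π :=
  (Continuous.intervalIntegrable (by fun_prop) _ _).congr_uIoo eqOn_rTheta_zero_pi.symm

lemma intervalIntegrable_rTheta (c lam : ℝ) :
    IntervalIntegrable (rTheta c lam) volume (-π) π :=
  (intervalIntegrable_rTheta_neg_pi_zero c lam).trans (intervalIntegrable_rTheta_zero_pi c lam)

lemma integral_rTheta (hc : 0 ≤ c) (hlam : 0 < lam) :
    ∫ y in (-π)..π, rTheta c lam y = rhoC c lam / (2 * lam) := by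
  rw [← intervalIntegral.integral_add_adjacent_intervals
      (intervalIntegrable_rTheta_neg_pi_zero c lam) (intervalIntegrable_rTheta_zero_pi c lam),
    intervalIntegral.integral_congr_uIoo eqOn_rTheta_neg_pi_zero,
    intervalIntegral.integral_congr_uIoo eqOn_rTheta_zero_pi,
    intervalIntegral.integral_const_mul, intervalIntegral.integral_const_mul,
    integral_exp_neg_mul hlam.ne', integral_exp_neg_mul hlam.ne', rhoC]
  have hK := (sub_pos.2 (one_lt_exp_two_pi_mul_add hc hlam)).ne'
  have hE2 : exp (2 * π * lam) = exp (lam * π) ^ 2 := by rw [← exp_nat_mul]; ring_nf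
  have hE2C : exp (2 * π * lam + c / 2) = exp (lam * π) ^ 2 * exp (c / 2) := by
    rw [exp_add, hE2]
  rw [hE2C] at hK ⊢
  rw [hE2, show -lam * -π = lam * π by ring, show -lam * π = -(lam * π) by ring, exp_neg, exp_neg,
    mul_zero, exp_zero]
  field_simp
  ring

end Profile

section Convolution

variable {c lam : ℝ} {J : ℝ → ℝ}

lemma RTheta_sub_integral_rTheta_mul (hJ : Continuous J) (z k : ℝ) :
    RTheta J c lam z - (∫ y in (-π)..π, rTheta c lam y) * k =
      ∫ y in (-π)..π, (J (z - y) - k) * rTheta c lam y := by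
  have hr := intervalIntegrable_rTheta c lam
  simp only [sub_mul]
  rw [intervalIntegral.integral_sub (hr.continuousOn_mul (by fun_prop)) (hr.const_mul k),
    intervalIntegral.integral_const_mul, mul_comm k, RTheta]

lemma RTheta_neg (z : ℝ) : RTheta (-J) c lam z = -RTheta J c lam z := by
  simp only [RTheta, Pi.neg_apply, neg_mul, intervalIntegral.integral_neg]

lemma mul_le_RTheta (hc : 0 ≤ c) (hlam : 0 < lam) (hJ : Continuous J) {k : ℝ}
    (hk : ∀ x, k ≤ J x) (z : ℝ) : rhoC c lam / (2 * lam) * k ≤ RTheta J c lam z := by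
  rw [← integral_rTheta hc hlam, ← sub_nonneg, RTheta_sub_integral_rTheta_mul hJ]
  exact intervalIntegral.integral_nonneg (by linarith [pi_pos])
    fun y _ => mul_nonneg (sub_nonneg.2 (hk _)) (rTheta_pos hc hlam y).le

lemma mul_lt_RTheta (hc : 0 ≤ c) (hlam : 0 < lam) (hJ : Continuous J)
    (hper : Periodic J (2 * π)) {k : ℝ} (hk : ∀ x, k ≤ J x) (hne : ∃ x, J x ≠ k) (z : ℝ) :
    rhoC c lam / (2 * lam) * k < RTheta J c lam z := by
  rw [← integral_rTheta hc hlam, ← sub_pos, RTheta_sub_integral_rTheta_mul hJ]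
  refine integral_mul_pos_of_exists_ne_zero (by linarith [pi_pos])
    (intervalIntegrable_rTheta c lam) (fun y _ => rTheta_pos hc hlam y) (by fun_prop)
    (fun y _ => sub_nonneg.2 (hk _)) ?_
  obtain ⟨x, hx⟩ := hne
  obtain ⟨y, hy, hyx⟩ := (hper.const_sub z).exists_mem_Ico two_pi_pos (z - x) (-π)
  rw [sub_sub_cancel] at hyx
  exact ⟨y, ⟨hy.1, by linarith [hy.2]⟩, sub_ne_zero.2 (hyx ▸ hx)⟩

lemma RTheta_le_mul (hc : 0 ≤ c) (hlam : 0 < lam) (hJ : Continuous J) {k : ℝ}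
    (hk : ∀ x, J x ≤ k) (z : ℝ) : RTheta J c lam z ≤ rhoC c lam / (2 * lam) * k := by
  have := mul_le_RTheta hc hlam hJ.neg (k := -k) (fun x => neg_le_neg (hk x)) z
  rw [RTheta_neg] at this
  linarith

lemma RTheta_lt_mul (hc : 0 ≤ c) (hlam : 0 < lam) (hJ : Continuous J)
    (hper : Periodic J (2 * π)) {k : ℝ} (hk : ∀ x, J x ≤ k) (hne : ∃ x, J x ≠ k) (z : ℝ) :
    RTheta J c lam z < rhoC c lam / (2 * lam) * k := by
  have := mul_lt_RTheta hc hlam hJ.neg (fun x => congrArg Neg.neg (hper x)) (k := -k)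
    (fun x => neg_le_neg (hk x)) (hne.imp fun x => mt neg_inj.1) z
  rw [RTheta_neg] at this
  linarith

end Convolution

theorem rotating_waves_stmt_14_general (c lam : ℝ) (hc : 0 ≤ c) (hlam : 0 < lam)
    (J : ℝ → ℝ) (hJcont : Continuous J)
    (hJper : ∀ x : ℝ, J (x + 2 * Real.pi) = J x) :
    (∀ z : ℝ,
      rhoC c lam / (2 * lam) * sInf (Set.range J) ≤ RTheta J c lam z ∧
      RTheta J c lam z ≤ rhoC c lam / (2 * lam) * sSup (Set.range J)) ∧
    ((¬ ∃ k : ℝ, ∀ x : ℝ, J x = k) → ∀ z : ℝ,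
      rhoC c lam / (2 * lam) * sInf (Set.range J) < RTheta J c lam z ∧
      RTheta J c lam z < rhoC c lam / (2 * lam) * sSup (Set.range J)) := by
  have hper : Periodic J (2 * π) := hJper
  have hrange := hper.compact_of_continuous two_pi_pos.ne' hJcont
  have hinf (x : ℝ) : sInf (range J) ≤ J x := csInf_le hrange.bddBelow (mem_range_self x)
  have hsup (x : ℝ) : J x ≤ sSup (range J) := le_csSup hrange.bddAbove (mem_range_self x)
  refine ⟨fun z => ⟨mul_le_RTheta hc hlam hJcont hinf z, RTheta_le_mul hc hlam hJcont hsup z⟩,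
    fun hnonconst z => ?_⟩
  have hne (k : ℝ) : ∃ x, J x ≠ k := not_forall.1 (not_exists.1 hnonconst k)
  exact ⟨mul_lt_RTheta hc hlam hJcont hper hinf (hne _) z,
    RTheta_lt_mul hc hlam hJcont hper hsup (hne _) z⟩

/-- Lemma 5.2 (lemma `ulb`): for all `z`,
`(ρ_c(λ)/(2λ)) min J ≤ R_λ(z) ≤ (ρ_c(λ)/(2λ)) max J`,
with strict inequalities when `J` is not constant. -/
theorem rotating_waves_stmt_14 (c lam : ℝ) (hc : 0 ≤ c) (hlam : 0 < lam)
    (J : ℝ → ℝ) (hJcont : Continuous J) (hJpos : ∀ x : ℝ, 0 < J x)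
    (hJper : ∀ x : ℝ, J (x + 2 * Real.pi) = J x) :
    (∀ z : ℝ,
      rhoC c lam / (2 * lam) * sInf (Set.range J) ≤ RTheta J c lam z ∧
      RTheta J c lam z ≤ rhoC c lam / (2 * lam) * sSup (Set.range J)) ∧
    ((¬ ∃ k : ℝ, ∀ x : ℝ, J x = k) → ∀ z : ℝ,
      rhoC c lam / (2 * lam) * sInf (Set.range J) < RTheta J c lam z ∧
      RTheta J c lam z < rhoC c lam / (2 * lam) * sSup (Set.range J)) :=
  rotating_waves_stmt_14_general c lam hc hlam J hJcont hJper
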